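/- arXiv:1107.1955 — 4 statements merged into one kernel-verified Lean document; each statement's English description precedes it below -/
import Mathlib

section
/- Let ω ∈ ℝ and let X_j(t) = e^{iωt + iθ_j} for 1 ≤ j ≤ N solve the point vortex system i·dX_j/dt + Σ_{k≠j}(X_j − X_k)/|X_j − X_k|² = 0 with all circulations equal to 1. If Φ : ℝ×ℝ → ℂ\{0} solves i∂_tΦ + ∂_σ²Φ + ω·(Φ/|Φ|²)(1 − |Φ|²) = 0, then Ψ_j(t,σ) = X_j(t)·Φ(t,σ) solves the filament system i∂_tΨ_j + ∂_σ²Ψ_j + Σ_{k≠j}(Ψ_j − Ψ_k)/|Ψ_j − Ψ_k|² = 0. -/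
open Complex Finset

theorem stmt_7 (N : ℕ) (ω : ℝ) (θ : Fin N → ℝ)
    (X : Fin N → ℝ → ℂ)
    (hX : ∀ j t, X j t = Complex.exp (I * (ω * t + θ j)))
    (hsep : ∀ (t : ℝ) (j k : Fin N), j ≠ k → X j t ≠ X k t)
    (hvortex : ∀ (j : Fin N) (t : ℝ),
      I * deriv (X j) t
        + ∑ k ∈ univ.erase j, (X j t - X k t) / ((‖X j t - X k t‖^2 : ℝ) : ℂ) = 0)
    (Φ : ℝ → ℝ → ℂ)
    (hΦ0 : ∀ t σ, Φ t σ ≠ 0)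
    (hΦt : ∀ t σ, DifferentiableAt ℝ (fun s => Φ s σ) t)
    (hΦσ : ∀ t, ContDiff ℝ 2 (fun σ => Φ t σ))
    (hPDE : ∀ t σ,
      I * deriv (fun s => Φ s σ) t
        + deriv (deriv (fun x => Φ t x)) σ
        + (ω : ℂ) * (Φ t σ / ((‖Φ t σ‖^2 : ℝ) : ℂ)) * (1 - ((‖Φ t σ‖^2 : ℝ) : ℂ)) = 0) :
    ∀ (j : Fin N) (t σ : ℝ),
      I * deriv (fun s => X j s * Φ s σ) t
        + deriv (deriv (fun x => X j t * Φ t x)) σ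
        + ∑ k ∈ univ.erase j,
            (X j t * Φ t σ - X k t * Φ t σ)
              / ((‖X j t * Φ t σ - X k t * Φ t σ‖^2 : ℝ) : ℂ) = 0 := by
  intro j t σ
  have hXfun : X j = fun s : ℝ => Complex.exp (I * ((ω : ℂ) * s + (θ j : ℂ))) :=
    funext (hX j)
  -- derivative of X j
  have hXd : HasDerivAt (X j) (I * ω * X j t) t := by
    rw [hXfun]
    have h1 : HasDerivAt (fun s : ℝ => ((ω * s + θ j : ℝ) : ℂ)) (ω : ℂ) t := by
      have h0 : HasDerivAt (fun s : ℝ => ω * s + θ j) ω t := by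
        simpa using ((hasDerivAt_id t).const_mul ω).add_const (θ j)
      simpa using h0.ofReal_comp
    have h2 : HasDerivAt (fun s : ℝ => I * ((ω * s + θ j : ℝ) : ℂ)) (I * (ω : ℂ)) t :=
      h1.const_mul I
    have h2' : HasDerivAt (fun s : ℝ => I * ((ω : ℂ) * s + (θ j : ℂ))) (I * (ω : ℂ)) t := by
      convert h2 using 2 with s
      push_cast; ring
    have h3 := h2'.cexp
    convert h3 using 1
    ring
  have hXderiv : deriv (X j) t = I * ω * X j t := hXd.deriv
  -- time derivative of product
  have hmul : deriv (fun s => X j s * Φ s σ) t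
      = I * ω * X j t * Φ t σ + X j t * deriv (fun s => Φ s σ) t :=
    (hXd.mul (hΦt t σ).hasDerivAt).deriv
  -- space derivatives
  have hC2 : ContDiff ℝ ((1 : ℕ) + 1) (fun x => Φ t x) := by
    have h := hΦσ t
    exact h.of_le (by norm_num)
  have hd1 : Differentiable ℝ (fun x => Φ t x) := (hΦσ t).differentiable (by norm_num)
  have hd2 : Differentiable ℝ (deriv (fun x => Φ t x)) :=
    ((contDiff_succ_iff_deriv.mp hC2).2.2).differentiable (by norm_num)
  have hσσ : deriv (deriv (fun x => X j t * Φ t x)) σ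
      = X j t * deriv (deriv (fun x => Φ t x)) σ := by
    have h1 : deriv (fun x => X j t * Φ t x) = fun x => X j t * deriv (fun y => Φ t y) x := by
      funext x; exact deriv_const_mul _ (hd1 x)
    rw [h1]
    exact deriv_const_mul _ (hd2 σ)
  -- nonvanishing
  have hA : ((‖Φ t σ‖ ^ 2 : ℝ) : ℂ) ≠ 0 := by
    simp only [ne_eq, Complex.ofReal_eq_zero]
    exact pow_ne_zero _ (norm_ne_zero_iff.mpr (hΦ0 t σ))
  -- rewrite the sum
  have hsumEq : ∑ k ∈ univ.erase j,
      (X j t * Φ t σ - X k t * Φ t σ)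
        / ((‖X j t * Φ t σ - X k t * Φ t σ‖ ^ 2 : ℝ) : ℂ)
      = (∑ k ∈ univ.erase j, (X j t - X k t) / ((‖X j t - X k t‖ ^ 2 : ℝ) : ℂ))
          * (Φ t σ / ((‖Φ t σ‖ ^ 2 : ℝ) : ℂ)) := by
    rw [Finset.sum_mul]
    refine Finset.sum_congr rfl (fun k hk => ?_)
    have hjk : X j t ≠ X k t := hsep t j k (Finset.ne_of_mem_erase hk).symm
    have ha : ((‖X j t - X k t‖ ^ 2 : ℝ) : ℂ) ≠ 0 := by
      simp only [ne_eq, Complex.ofReal_eq_zero]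
      exact pow_ne_zero _ (norm_ne_zero_iff.mpr (sub_ne_zero.mpr hjk))
    have hfac : X j t * Φ t σ - X k t * Φ t σ = (X j t - X k t) * Φ t σ := by ring
    rw [hfac, norm_mul]
    push_cast [mul_pow]
    field_simp
  have hv := hvortex j t
  rw [hXderiv] at hv
  have hsum2 : ∑ k ∈ univ.erase j, (X j t - X k t) / ((‖X j t - X k t‖ ^ 2 : ℝ) : ℂ)
      = (ω : ℂ) * X j t := by
    linear_combination hv - (ω : ℂ) * X j t * Complex.I_sq
  have hP := hPDE t σ
  rw [hmul, hσσ, hsumEq, hsum2]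
  have hΦA : Φ t σ / ((‖Φ t σ‖ ^ 2 : ℝ) : ℂ) * ((‖Φ t σ‖ ^ 2 : ℝ) : ℂ) = Φ t σ :=
    div_mul_cancel₀ _ hA
  linear_combination X j t * hP + (ω : ℂ) * X j t * Φ t σ * Complex.I_sq
    + (ω : ℂ) * X j t * hΦA
end

section
/- Let ω > 0 and c with 0 < 2ω − c² sufficiently small, and let b(η) = a(η)/η² where a(η) = −(c²−4ω)η² + 4ω((η−1)ln(1−η) − η). Then b is strictly decreasing on [0, σ₀] where σ₀ = 3(2ω−c²)/(2ω), b(0) = 2ω − c² > 0, b(σ₀) ≤ 0, and hence b has a unique zero σ₁ ∈ (0, σ₀]. -/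
/-!
Write `δ = 2ω - c²` and `N(η) = (η - 1) log (1 - η) - η = -∑_{k ≥ 2} η ^ k / (k (k - 1))`, so that
`b(η) = δ + 4ω (N(η) / η² + 1/2)`. Dropping the terms with `k ≥ 4` gives `b(η) ≤ δ - 2ωη/3`,
which vanishes exactly at `σ₀`, while `(N(η) / η²)' = ((2 - η) log (1 - η) + 2η) / η³ < 0` gives
strict monotonicity. A crude lower bound `b(η) ≥ δ - 6ωη` makes `b(σ₀/9) ≥ 0`, and the
intermediate value theorem on `[σ₀/9, σ₀]` produces the zero, unique by monotonicity.
-/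

open Real Set

lemma log_one_sub_le {t : ℝ} (h0 : 0 ≤ t) (h1 : t < 1) : log (1 - t) ≤ -(t + t ^ 2 / 2) := by
  have hsum := hasSum_pow_div_log_of_abs_lt_one (x := t) (by rwa [abs_of_nonneg h0])
  have := sum_le_hasSum (Finset.range 2) (fun n _ => by positivity) hsum
  norm_num [Finset.sum_range_succ] at this
  linarith

lemma hasDerivAt_log_one_sub {s : ℝ} (hs : s < 1) :
    HasDerivAt (fun t => log (1 - t)) (-(1 - s)⁻¹) s :=
  (((hasDerivAt_id' s).const_sub 1).log (sub_ne_zero.mpr hs.ne')).congr_deriv (by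
    rw [neg_div, one_div])

noncomputable def logOneSubAntideriv (t : ℝ) : ℝ := (t - 1) * log (1 - t) - t

lemma hasDerivAt_logOneSubAntideriv {s : ℝ} (hs : s < 1) :
    HasDerivAt logOneSubAntideriv (log (1 - s)) s :=
  ((((hasDerivAt_id' s).sub_const 1).mul (hasDerivAt_log_one_sub hs)).sub
    (hasDerivAt_id' s)).congr_deriv (by
      field_simp [sub_ne_zero.mpr hs.ne']
      ring)

@[simp]
lemma logOneSubAntideriv_zero : logOneSubAntideriv 0 = 0 := by
  simp [logOneSubAntideriv]

lemma continuousOn_logOneSubAntideriv : ContinuousOn logOneSubAntideriv (Iio 1) :=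
  fun _ hs => (hasDerivAt_logOneSubAntideriv hs).continuousAt.continuousWithinAt

lemma logOneSubAntideriv_le {t : ℝ} (h0 : 0 ≤ t) (h1 : t < 1) :
    logOneSubAntideriv t ≤ -(t ^ 2 / 2) - t ^ 3 / 6 := by
  let g t := logOneSubAntideriv t + t ^ 2 / 2 + t ^ 3 / 6
  have hg (s : ℝ) (hs : s < 1) : HasDerivAt g (log (1 - s) + s + s ^ 2 / 2) s :=
    (((hasDerivAt_logOneSubAntideriv hs).add ((hasDerivAt_pow 2 s).div_const 2)).add
      ((hasDerivAt_pow 3 s).div_const 6)).congr_deriv (by push_cast; ring)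
  have hanti : AntitoneOn g (Ico 0 1) := by
    refine antitoneOn_of_hasDerivWithinAt_nonpos (convex_Ico 0 1)
      (f' := fun s => log (1 - s) + s + s ^ 2 / 2)
      (fun s hs => (hg s hs.2).continuousAt.continuousWithinAt) ?_ ?_
    · intro s hs
      rw [interior_Ico] at hs
      exact (hg s hs.2).hasDerivWithinAt
    · intro s hs
      rw [interior_Ico] at hs
      linarith [log_one_sub_le hs.1.le hs.2]
  have := hanti ⟨le_rfl, zero_lt_one⟩ ⟨h0, h1⟩ h0
  simp only [g, logOneSubAntideriv_zero] at this
  linarith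

lemma le_logOneSubAntideriv {t : ℝ} (h0 : 0 ≤ t) (h1 : t < 1) :
    -(t ^ 2 / 2) - 3 * t ^ 3 / 2 ≤ logOneSubAntideriv t := by
  have h := abs_log_sub_add_sum_range_le (x := t) (by rwa [abs_of_nonneg h0]) 2
  rw [abs_of_nonneg h0] at h
  norm_num [Finset.sum_range_succ] at h
  have hlog : log (1 - t) ≤ -(t + t ^ 2 / 2) + t ^ 3 / (1 - t) := by
    linarith [le_abs_self (t + t ^ 2 / 2 + log (1 - t))]
  have h1t : 0 < 1 - t := by linarith
  have hmul : t ^ 3 / (1 - t) * (1 - t) = t ^ 3 := div_mul_cancel₀ _ h1t.ne'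
  unfold logOneSubAntideriv
  nlinarith [mul_le_mul_of_nonneg_left hlog h1t.le]

lemma two_sub_mul_log_one_sub_add_lt {t : ℝ} (h0 : 0 < t) (h1 : t < 1) :
    (2 - t) * log (1 - t) + 2 * t < 0 := by
  let g t := (2 - t) * log (1 - t) + 2 * t
  have hg (s : ℝ) (hs : s < 1) :
      HasDerivAt g (-log (1 - s) - (2 - s) * (1 - s)⁻¹ + 2) s :=
    ((((hasDerivAt_id' s).const_sub 2).mul (hasDerivAt_log_one_sub hs)).add
      ((hasDerivAt_id' s).const_mul 2)).congr_deriv (by ring)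
  have hanti : StrictAntiOn g (Ico 0 1) := by
    refine strictAntiOn_of_hasDerivWithinAt_neg (convex_Ico 0 1)
      (f' := fun s => -log (1 - s) - (2 - s) * (1 - s)⁻¹ + 2)
      (fun s hs => (hg s hs.2).continuousAt.continuousWithinAt) ?_ ?_
    · intro s hs
      rw [interior_Ico] at hs
      exact (hg s hs.2).hasDerivWithinAt
    · intro s hs
      rw [interior_Ico] at hs
      have hpos : 0 < 1 - s := by linarith [hs.2]
      -- with `u = (1 - s)⁻¹`, the derivative is `log u + 1 - u`
      have hlog := log_lt_sub_one_of_pos (inv_pos.mpr hpos) (by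
        rw [Ne, inv_eq_one]; linarith [hs.1])
      rw [log_inv] at hlog
      have hu : (2 - s) * (1 - s)⁻¹ = (1 - s)⁻¹ + 1 := by field_simp; ring
      linarith
  simpa [g] using hanti ⟨le_rfl, zero_lt_one⟩ ⟨h0.le, h1⟩ h0

lemma continuousOn_logOneSubAntideriv_div_sq :
    ContinuousOn (fun t => logOneSubAntideriv t / t ^ 2) (Ioo 0 1) :=
  (continuousOn_logOneSubAntideriv.mono fun _ hs => hs.2).div (by fun_prop)
    fun _ hs => pow_ne_zero 2 hs.1.ne'

lemma strictAntiOn_logOneSubAntideriv_div_sq :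
    StrictAntiOn (fun t => logOneSubAntideriv t / t ^ 2) (Ioo 0 1) := by
  refine strictAntiOn_of_hasDerivWithinAt_neg (convex_Ioo 0 1)
    (f' := fun s => s * ((2 - s) * log (1 - s) + 2 * s) / (s ^ 2) ^ 2) ?_ ?_ ?_
  · exact continuousOn_logOneSubAntideriv_div_sq
  · intro s hs
    rw [interior_Ioo] at hs
    refine ((hasDerivAt_logOneSubAntideriv hs.2).div (hasDerivAt_pow 2 s)
      (pow_ne_zero 2 hs.1.ne')).hasDerivWithinAt.congr_deriv ?_
    simp only [logOneSubAntideriv]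
    push_cast
    ring
  · intro s hs
    rw [interior_Ioo] at hs
    exact div_neg_of_neg_of_pos (mul_neg_of_pos_of_neg hs.1
      (two_sub_mul_log_one_sub_add_lt hs.1 hs.2)) (pow_pos (pow_pos hs.1 2) 2)

lemma logOneSubAntideriv_div_sq_add_half_mem_Icc {t : ℝ} (h0 : 0 < t) (h1 : t < 1) :
    logOneSubAntideriv t / t ^ 2 + 1 / 2 ∈ Icc (-(3 * t / 2)) (-(t / 6)) := by
  have ht : 0 < t ^ 2 := by positivity
  constructor
  · rw [← sub_le_iff_le_add, le_div_iff₀ ht]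
    linarith [le_logOneSubAntideriv h0.le h1]
  · rw [← le_sub_iff_add_le, div_le_iff₀ ht]
    linarith [logOneSubAntideriv_le h0.le h1]

lemma existsUnique_mem_Ioc_eq_zero_of_strictAntiOn {f : ℝ → ℝ} {a s σ : ℝ} (has : a < s)
    (hsσ : s ≤ σ) (hf : StrictAntiOn f (Icc a σ)) (hcont : ContinuousOn f (Icc s σ))
    (hfs : 0 ≤ f s) (hfσ : f σ ≤ 0) : ∃! x, x ∈ Ioc a σ ∧ f x = 0 := by
  obtain ⟨x, hx, hfx⟩ := intermediate_value_Icc' hsσ hcont ⟨hfσ, hfs⟩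
  have hxa : x ∈ Ioc a σ := ⟨has.trans_le hx.1, hx.2⟩
  refine ⟨x, ⟨hxa, hfx⟩, fun y hy => hf.injOn (Ioc_subset_Icc_self hy.1)
    (Ioc_subset_Icc_self hxa) (hy.2.trans hfx.symm)⟩

/-- The paper's `b(η) = a(η) / η²` with `δ = 2ω - c²`, extended by its limit `δ` at `0`. -/
noncomputable def bProfile (δ ω η : ℝ) : ℝ :=
  if η = 0 then δ else δ + 4 * ω * (logOneSubAntideriv η / η ^ 2 + 1 / 2)

section bProfile

variable {δ ω : ℝ}

@[simp]
lemma bProfile_zero : bProfile δ ω 0 = δ := if_pos rfl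

lemma bProfile_of_ne_zero {η : ℝ} (hη : η ≠ 0) :
    bProfile δ ω η = δ + 4 * ω * (logOneSubAntideriv η / η ^ 2 + 1 / 2) := if_neg hη

lemma bProfile_mem_Icc (hω : 0 ≤ ω) {η : ℝ} (h0 : 0 < η) (h1 : η < 1) :
    bProfile δ ω η ∈ Icc (δ - 6 * ω * η) (δ - 2 * ω * η / 3) := by
  obtain ⟨hlo, hhi⟩ := logOneSubAntideriv_div_sq_add_half_mem_Icc h0 h1
  rw [bProfile_of_ne_zero h0.ne']
  constructor <;> nlinarith

lemma strictAntiOn_bProfile (hω : 0 < ω) : StrictAntiOn (bProfile δ ω) (Ico 0 1) := by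
  rintro p ⟨hp0, -⟩ q ⟨-, hq1⟩ hpq
  rcases hp0.eq_or_lt with rfl | hp0
  · rw [bProfile_zero]
    linarith [(bProfile_mem_Icc (δ := δ) hω.le hpq hq1).2, mul_pos hω hpq]
  · rw [bProfile_of_ne_zero hp0.ne', bProfile_of_ne_zero (hp0.trans hpq).ne']
    have := strictAntiOn_logOneSubAntideriv_div_sq ⟨hp0, hpq.trans hq1⟩ ⟨hp0.trans hpq, hq1⟩ hpq
    gcongr

lemma continuousOn_bProfile : ContinuousOn (bProfile δ ω) (Ioo 0 1) :=
  (continuousOn_const.add (continuousOn_const.mul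
    (continuousOn_logOneSubAntideriv_div_sq.add continuousOn_const))).congr
    fun _ hη => bProfile_of_ne_zero hη.1.ne'

end bProfile

theorem stmt_14 (ω : ℝ) (hω : 0 < ω) :
    ∃ ε > (0:ℝ), ∀ c : ℝ, 0 < 2*ω - c^2 → 2*ω - c^2 < ε →
      ∀ a b : ℝ → ℝ,
        (∀ η, a η = -(c^2 - 4*ω) * η^2 + 4*ω*((η - 1) * Real.log (1 - η) - η)) →
        (∀ η, b η = if η = 0 then 2*ω - c^2 else a η / η^2) →
        StrictAntiOn b (Set.Icc 0 (3*(2*ω - c^2)/(2*ω))) ∧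
        b 0 = 2*ω - c^2 ∧ 0 < b 0 ∧
        b (3*(2*ω - c^2)/(2*ω)) ≤ 0 ∧
        (∃! σ₁ : ℝ, σ₁ ∈ Set.Ioc 0 (3*(2*ω - c^2)/(2*ω)) ∧ b σ₁ = 0) := by
  refine ⟨2 * ω / 3, by positivity, fun c hδ hδε a b ha hb => ?_⟩
  set δ := 2 * ω - c ^ 2
  set σ₀ := 3 * δ / (2 * ω)
  obtain rfl : b = bProfile δ ω := funext fun η => by
    rw [hb, bProfile]
    split_ifs with hη
    · rfl
    · rw [ha, logOneSubAntideriv]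
      field_simp
      ring
  have hσ₀ : 0 < σ₀ := by positivity
  have hσ₀1 : σ₀ < 1 := by rw [div_lt_one (by positivity)]; linarith
  have hanti := (strictAntiOn_bProfile (δ := δ) hω).mono (Icc_subset_Ico_right hσ₀1)
  have hbσ₀ : bProfile δ ω σ₀ ≤ 0 := by
    have : 2 * ω * σ₀ / 3 = δ := by simp only [σ₀]; field_simp
    linarith [(bProfile_mem_Icc (δ := δ) hω.le hσ₀ hσ₀1).2]
  refine ⟨hanti, bProfile_zero, bProfile_zero.symm ▸ hδ, hbσ₀,
    existsUnique_mem_Ioc_eq_zero_of_strictAntiOn (s := σ₀ / 9) (by positivity) (by linarith)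
      hanti (continuousOn_bProfile.mono ?_) ?_ hbσ₀⟩
  · exact fun η hη => ⟨by linarith [hη.1], by linarith [hη.2]⟩
  · have : 6 * ω * (σ₀ / 9) = δ := by simp only [σ₀]; field_simp; ring
    linarith [(bProfile_mem_Icc (δ := δ) hω.le (η := σ₀ / 9) (by positivity) (by linarith)).1]
end

section
/- Let v = v₁ + i·v₂ be a C² solution of i·c·v' + v'' + ω·(v/|v|²)(1 − |v|²) = 0 on ℝ with v never zero, and set η = 1 − |v|². If v' and η vanish at +∞, then v₁v₂' − v₁'v₂ = (c/2)·η on all of ℝ. -/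
open Complex Filter
open ComplexConjugate Topology

/-!
The charge defect `F = Im(conj v · v') - (c/2)(1 - |v|²)` equals `v₁v₂' - v₁'v₂ - (c/2)η`.
Its derivative is `Im(conj v · v'') + c Re(conj v · v')`, which vanishes by the equation because
`conj v` times the nonlinear term is real. So `F` is constant, and it tends to `0` at `+∞` since
`|v| → 1` and `v' → 0`.
-/

lemma HasDerivAt.im_conj_mul {f f' : ℝ → ℂ} {x : ℝ} {b : ℂ}
    (hf : HasDerivAt f (f' x) x) (hf' : HasDerivAt f' b x) :
    HasDerivAt (fun y => (conj (f y) * f' y).im) (conj (f x) * b).im x := by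
  refine (imCLM.hasFDerivAt.comp_hasDerivAt x (hf.star.mul hf')).congr_deriv ?_
  simp [mul_im]
  ring

-- `conj z * z / ‖z‖²` is real: it is `1`, or `0 / 0 = 0` when `z = 0`.
lemma im_conj_mul_eq_neg_mul_re {c ω : ℝ} {z w u : ℂ}
    (h : I * c * w + u + ω * (z / ((‖z‖ ^ 2 : ℝ) : ℂ)) * (1 - ((‖z‖ ^ 2 : ℝ) : ℂ)) = 0) :
    (conj z * u).im = -c * (conj z * w).re := by
  set n : ℝ := ‖z‖ ^ 2 with hn
  have hz : conj z * z = n := by rw [hn]; push_cast; exact conj_mul' z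
  have hu : conj z * u = -(I * c * (conj z * w)) - ((ω * (n / n) * (1 - n) : ℝ) : ℂ) := by
    push_cast
    linear_combination conj z * h - ω / n * (1 - n) * hz
  rw [hu]
  simp [mul_im]

lemma eq_of_hasDerivAt_zero_of_tendsto {f : ℝ → ℝ} {l : ℝ}
    (hf : ∀ x, HasDerivAt f 0 x) (hl : Tendsto f atTop (𝓝 l)) (x : ℝ) : f x = l :=
  tendsto_nhds_unique (tendsto_const_nhds.congr
    (is_const_of_deriv_eq_zero (fun y => (hf y).differentiableAt) (fun y => (hf y).deriv) x)) hl

lemma tendsto_conj_mul_zero_of_tendsto_norm_sq {α : Type*} {l : Filter α} {f g : α → ℂ} {a : ℝ}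
    (hf : Tendsto (fun x => ‖f x‖ ^ 2) l (𝓝 a)) (hg : Tendsto g l (𝓝 0)) :
    Tendsto (fun x => conj (f x) * g x) l (𝓝 0) := by
  rw [tendsto_zero_iff_norm_tendsto_zero]
  simp only [norm_mul, RCLike.norm_conj]
  have hnorm : Tendsto (fun x => ‖f x‖) l (𝓝 √a) := by
    simpa only [Real.sqrt_sq (norm_nonneg _)] using hf.sqrt
  simpa using hnorm.mul hg.norm

theorem stmt_16_general (c ω : ℝ) (v : ℝ → ℂ)
    (hv : ContDiff ℝ 2 v)
    (hODE : ∀ σ : ℝ,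
      I * (c : ℂ) * deriv v σ + deriv (deriv v) σ
        + (ω : ℂ) * (v σ / ((‖v σ‖^2 : ℝ) : ℂ)) * (1 - ((‖v σ‖^2 : ℝ) : ℂ)) = 0)
    (hv' : Tendsto (deriv v) atTop (nhds 0))
    (hη : Tendsto (fun σ => 1 - ‖v σ‖^2) atTop (nhds 0)) :
    ∀ σ : ℝ, (v σ).re * (deriv v σ).im - (deriv v σ).re * (v σ).im
      = (c/2) * (1 - ‖v σ‖^2) := by
  set F : ℝ → ℝ := fun x => (conj (v x) * deriv v x).im - c / 2 * (1 - ‖v x‖ ^ 2)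
  have hF' : ∀ x, HasDerivAt F 0 x := by
    intro x
    have h1 := (hv.differentiable two_ne_zero x).hasDerivAt
    have h2 := (hv.differentiable_deriv_two x).hasDerivAt
    refine ((h1.im_conj_mul h2).sub
      (((hasDerivAt_const x 1).sub h1.norm_sq).const_mul (c / 2))).congr_deriv ?_
    rw [im_conj_mul_eq_neg_mul_re (hODE x), Complex.inner]
    simp only [mul_re, conj_re, conj_im]
    ring
  have hFlim : Tendsto F atTop (𝓝 0) := by
    have hsq : Tendsto (fun x => ‖v x‖ ^ 2) atTop (𝓝 1) := by
      simpa using (tendsto_const_nhds (x := (1 : ℝ))).sub hη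
    simpa [F] using ((continuous_im.tendsto 0).comp
      (tendsto_conj_mul_zero_of_tendsto_norm_sq hsq hv')).sub (hη.const_mul (c / 2))
  intro σ
  have hσ := eq_of_hasDerivAt_zero_of_tendsto hF' hFlim σ
  simp only [F, mul_im, conj_re, conj_im] at hσ
  linarith

theorem stmt_16 (c ω : ℝ) (v : ℝ → ℂ)
    (hv : ContDiff ℝ 2 v) (hne : ∀ σ, v σ ≠ 0)
    (hODE : ∀ σ : ℝ,
      I * (c : ℂ) * deriv v σ + deriv (deriv v) σ
        + (ω : ℂ) * (v σ / ((‖v σ‖^2 : ℝ) : ℂ)) * (1 - ((‖v σ‖^2 : ℝ) : ℂ)) = 0)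
    (hv' : Tendsto (deriv v) atTop (nhds 0))
    (hη : Tendsto (fun σ => 1 - ‖v σ‖^2) atTop (nhds 0)) :
    ∀ σ : ℝ, (v σ).re * (deriv v σ).im - (deriv v σ).re * (v σ).im
      = (c/2) * (1 - ‖v σ‖^2) :=
  stmt_16_general c ω v hv hODE hv' hη
end

section
/- Under the same hypotheses (v a non-vanishing C² solution of ic v' + v'' + ω(v/|v|²)(1−|v|²) = 0 with v', η = 1−|v|² vanishing at infinity), one has |v'|² = −ω·ln(1−η) − ω·η on ℝ. -/
/-!
Taking the real inner product of the equation with `v'` kills the term `i c v'`, which is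
orthogonal to `v'`, and turns the rest into the derivative of
`E = ‖v'‖² + ω ln ‖v‖² − ω ‖v‖²`. Hence `E` is constant, and its limit at infinity is `−ω`.
-/

open Complex Filter

open scoped RealInnerProductSpace

section Energy

variable {E : Type*} [NormedAddCommGroup E]

noncomputable def energy (ω : ℝ) (v v' : ℝ → E) (t : ℝ) : ℝ :=
  ‖v' t‖ ^ 2 + ω * Real.log (‖v t‖ ^ 2) - ω * ‖v t‖ ^ 2

theorem hasDerivAt_energy [InnerProductSpace ℝ E] {ω σ : ℝ} {v v' : ℝ → E} {a : E}
    (hv : HasDerivAt v (v' σ) σ) (hv' : HasDerivAt v' a σ) (hne : v σ ≠ 0) :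
    HasDerivAt (energy ω v v')
      (2 * ⟪v' σ, a + (ω * (1 - ‖v σ‖ ^ 2) / ‖v σ‖ ^ 2) • v σ⟫) σ := by
  have hn : ‖v σ‖ ^ 2 ≠ 0 := by positivity
  have h : HasDerivAt (energy ω v v') _ σ :=
    (hv'.norm_sq.add ((hv.norm_sq.log hn).const_mul ω)).sub (hv.norm_sq.const_mul ω)
  refine h.congr_deriv ?_
  rw [inner_add_right, inner_smul_right, real_inner_comm (v σ)]
  field_simp
  ring

theorem tendsto_energy_atTop {ω : ℝ} {v v' : ℝ → E} (hv' : Tendsto v' atTop (nhds 0))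
    (hv : Tendsto (fun t => ‖v t‖ ^ 2) atTop (nhds 1)) :
    Tendsto (energy ω v v') atTop (nhds (-ω)) := by
  have hlog : Tendsto (fun t => Real.log (‖v t‖ ^ 2)) atTop (nhds 0) := by
    simpa only [Real.log_one, Function.comp_def] using
      (Real.continuousAt_log one_ne_zero).tendsto.comp hv
  have h := ((hv'.norm.pow 2).add (hlog.const_mul ω)).sub (hv.const_mul ω)
  rw [norm_zero, zero_pow two_ne_zero, mul_zero, mul_one, add_zero, zero_sub] at h
  exact h

end Energy

theorem eq_of_hasDerivAt_zero_of_tendsto_atTop {F : Type*} [NormedAddCommGroup F]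
    [NormedSpace ℝ F] {f : ℝ → F} {L : F} (hf : ∀ t, HasDerivAt f 0 t)
    (hL : Tendsto f atTop (nhds L)) (t : ℝ) : f t = L := by
  have hconst : ∀ s, f t = f s :=
    is_const_of_deriv_eq_zero (fun s => (hf s).differentiableAt) (fun s => (hf s).deriv) t
  exact tendsto_nhds_unique (tendsto_const_nhds.congr hconst) hL

theorem Complex.inner_I_mul_ofReal_mul_self (r : ℝ) (z : ℂ) : ⟪z, I * r * z⟫ = 0 := by
  rw [Complex.inner, mul_assoc, mul_assoc, mul_conj]
  simp

theorem hasDerivAt_energy_zero_of_ode {c ω : ℝ} {v : ℝ → ℂ} (hv : ContDiff ℝ 2 v)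
    (hne : ∀ σ, v σ ≠ 0)
    (hODE : ∀ σ : ℝ,
      I * (c : ℂ) * deriv v σ + deriv (deriv v) σ
        + (ω : ℂ) * (v σ / ((‖v σ‖^2 : ℝ) : ℂ)) * (1 - ((‖v σ‖^2 : ℝ) : ℂ)) = 0)
    (σ : ℝ) : HasDerivAt (energy ω v (deriv v)) 0 σ := by
  have hv1 : ContDiff ℝ 1 (deriv v) := (contDiff_succ_iff_deriv.mp hv).2.2
  have h := hasDerivAt_energy (ω := ω)
    ((hv.differentiable two_ne_zero) σ).hasDerivAt
    ((hv1.differentiable one_ne_zero) σ).hasDerivAt (hne σ)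
  have hO := hODE σ
  set n := ‖v σ‖ ^ 2
  have hsum : deriv (deriv v) σ + (ω * (1 - n) / n) • v σ = -(I * c * deriv v σ) := by
    rw [Complex.real_smul]
    push_cast
    linear_combination hO
  rwa [hsum, inner_neg_right, Complex.inner_I_mul_ofReal_mul_self, neg_zero, mul_zero] at h

theorem stmt_17 (c ω : ℝ) (v : ℝ → ℂ)
    (hv : ContDiff ℝ 2 v) (hne : ∀ σ, v σ ≠ 0)
    (hODE : ∀ σ : ℝ,
      I * (c : ℂ) * deriv v σ + deriv (deriv v) σ
        + (ω : ℂ) * (v σ / ((‖v σ‖^2 : ℝ) : ℂ)) * (1 - ((‖v σ‖^2 : ℝ) : ℂ)) = 0)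
    (hv' : Tendsto (deriv v) atTop (nhds 0))
    (hη : Tendsto (fun σ => 1 - ‖v σ‖^2) atTop (nhds 0)) :
    ∀ σ : ℝ, ‖deriv v σ‖^2
      = -ω * Real.log (1 - (1 - ‖v σ‖^2)) - ω * (1 - ‖v σ‖^2) := by
  have hnorm : Tendsto (fun σ => ‖v σ‖ ^ 2) atTop (nhds 1) := by
    simpa using (tendsto_const_nhds (x := (1 : ℝ))).sub hη
  intro σ
  have h := eq_of_hasDerivAt_zero_of_tendsto_atTop
    (hasDerivAt_energy_zero_of_ode hv hne hODE) (tendsto_energy_atTop hv' hnorm) σ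
  rw [energy] at h
  rw [sub_sub_cancel]
  linarith
end
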